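/- arXiv:1608.06988 — 7 statements merged into one kernel-verified Lean document; each statement's English description precedes it below -/
import Mathlib

section
/- Let H be a complex Hilbert space, A a continuous linear selfadjoint operator on H, ω₁, ω₂ ∈ H, α ∈ ℂ with α ≠ 0, and z ∈ ℂ such that A − z·I is invertible (with continuous inverse R_z). Assume α⁻¹ + (R_z ω₂, ω₁) ≠ 0. Then Ã − z·I is invertible, where Ã = A + α(·,ω₁)ω₂, and its inverse is given by the Krein-type formula (Ã − z)⁻¹ = R_z + b_z (·, n_{\bar z}) m_z, where m_z = R_z ω₂, n_{\bar z} = (A − \bar z)⁻¹ ω₁ (note that A − \bar z = (A − z)* is invertible since A is selfadjoint), and b_z = −(α⁻¹ + (R_z ω₂, ω₁))⁻¹; that is, for every f ∈ H, (Ã − z)⁻¹ f = R_z f + b_z (f, n_{\bar z}) m_z. -/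
/-!
`Ã - z = (A - z) + (·, ω₁) αω₂` is a rank-one perturbation of the invertible `A - z`, so the
Sherman–Morrison formula inverts it whenever `1 + α (R ω₂, ω₁) = α (α⁻¹ + (R ω₂, ω₁))` is
nonzero. Selfadjointness gives `(A - z)* = A - z̄`, which turns `(R f, ω₁)` into `(f, S ω₁)`.
-/

open ContinuousLinearMap

local notation "⟪" x ", " y "⟫" => @inner ℂ _ _ x y

/-- The nonsymmetric rank-one perturbation `Ã = A + α(·,ω₁)ω₂`. -/
noncomputable def rankOnePert {H : Type*} [NormedAddCommGroup H] [InnerProductSpace ℂ H]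
    (A : H →L[ℂ] H) (α : ℂ) (ω₁ ω₂ : H) : H →L[ℂ] H :=
  A + α • (innerSL ℂ ω₁).smulRight ω₂

namespace ContinuousLinearMap

section ShermanMorrison

variable {𝕜 E : Type*} [NontriviallyNormedField 𝕜] [NormedAddCommGroup E] [NormedSpace 𝕜 E]

noncomputable def shermanMorrison (R : E →L[𝕜] E) (φ : E →L[𝕜] 𝕜) (u : E) : E →L[𝕜] E :=
  R - (1 + φ (R u))⁻¹ • (φ ∘L R).smulRight (R u)

theorem shermanMorrison_apply (R : E →L[𝕜] E) (φ : E →L[𝕜] 𝕜) (u x : E) :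
    shermanMorrison R φ u x = R x - ((1 + φ (R u))⁻¹ * φ (R x)) • R u := by
  simp [shermanMorrison, mul_smul]

variable {B R : E →L[𝕜] E} {φ : E →L[𝕜] 𝕜} {u : E}

theorem add_smulRight_comp_shermanMorrison (hBR : B ∘L R = 1) (h : 1 + φ (R u) ≠ 0) :
    (B + φ.smulRight u) ∘L shermanMorrison R φ u = 1 := by
  have hBRx (x : E) : B (R x) = x := DFunLike.congr_fun hBR x
  ext x
  set c := (1 + φ (R u))⁻¹
  have hc : c * (1 + φ (R u)) = 1 := inv_mul_cancel₀ h
  calc B (shermanMorrison R φ u x) + φ (shermanMorrison R φ u x) • u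
      = x + (φ (R x) * (1 - c * (1 + φ (R u)))) • u := by
        simp only [shermanMorrison_apply, map_sub, map_smul, hBRx, smul_eq_mul]
        module
    _ = x := by rw [hc, sub_self, mul_zero, zero_smul, add_zero]

theorem shermanMorrison_comp_add_smulRight (hRB : R ∘L B = 1) (h : 1 + φ (R u) ≠ 0) :
    shermanMorrison R φ u ∘L (B + φ.smulRight u) = 1 := by
  have hRBx (x : E) : R (B x) = x := DFunLike.congr_fun hRB x
  ext x
  set c := (1 + φ (R u))⁻¹
  have hc : c * (1 + φ (R u)) = 1 := inv_mul_cancel₀ h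
  calc shermanMorrison R φ u (B x + φ x • u)
      = x + (φ x * (1 - c * (1 + φ (R u)))) • R u := by
        simp only [shermanMorrison_apply, map_add, map_smul, hRBx]
        module
    _ = x := by rw [hc, sub_self, mul_zero, zero_smul, add_zero]

end ShermanMorrison

theorem inner_apply_eq_inner_of_comp_eq_one {𝕜 H : Type*} [RCLike 𝕜] [NormedAddCommGroup H]
    [InnerProductSpace 𝕜 H] [CompleteSpace H] {T R S : H →L[𝕜] H}
    (hTR : T ∘L R = 1) (hTS : T.adjoint ∘L S = 1) (x y : H) :
    inner 𝕜 (S x) y = inner 𝕜 x (R y) := by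
  calc inner 𝕜 (S x) y = inner 𝕜 (S x) (T (R y)) := by rw [← comp_apply, hTR]; rfl
    _ = inner 𝕜 x (R y) := by rw [← adjoint_inner_left, ← comp_apply, hTS]; rfl

end ContinuousLinearMap

theorem krein_formula_rankOnePert_general {H : Type*} [NormedAddCommGroup H] [InnerProductSpace ℂ H]
    [CompleteSpace H] (A : H →L[ℂ] H) (hA : IsSelfAdjoint A) (ω₁ ω₂ : H) (α : ℂ) (hα : α ≠ 0)
    (z : ℂ) (R : H →L[ℂ] H)
    (hR1 : (A - z • 1) ∘L R = 1) (hR2 : R ∘L (A - z • 1) = 1)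
    (S : H →L[ℂ] H)
    (hS1 : (A - (starRingEnd ℂ) z • 1) ∘L S = 1)
    (hb : α⁻¹ + ⟪ω₁, R ω₂⟫ ≠ 0) :
    ∃ T : H →L[ℂ] H,
      (rankOnePert A α ω₁ ω₂ - z • 1) ∘L T = 1 ∧
      T ∘L (rankOnePert A α ω₁ ω₂ - z • 1) = 1 ∧
      ∀ f : H, T f = R f + (-(α⁻¹ + ⟪ω₁, R ω₂⟫)⁻¹) • ⟪S ω₁, f⟫ • R ω₂ := by
  have hpert :
      rankOnePert A α ω₁ ω₂ - z • 1 = (A - z • 1) + (innerSL ℂ ω₁).smulRight (α • ω₂) := by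
    ext x
    simp only [rankOnePert, sub_apply, add_apply, smul_apply, smulRight_apply, smul_smul, mul_comm]
    abel
  have hden : 1 + ⟪ω₁, R (α • ω₂)⟫ = α * (α⁻¹ + ⟪ω₁, R ω₂⟫) := by
    rw [map_smul, inner_smul_right, mul_add, mul_inv_cancel₀ hα]
  have hden_ne : 1 + ⟪ω₁, R (α • ω₂)⟫ ≠ 0 := hden ▸ mul_ne_zero hα hb
  have hadj : (A - z • 1).adjoint = A - (starRingEnd ℂ) z • 1 := by
    rw [map_sub, hA.adjoint_eq, map_smulₛₗ, adjoint_one]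
  refine ⟨shermanMorrison R (innerSL ℂ ω₁) (α • ω₂), ?_, ?_, fun f ↦ ?_⟩
  · rw [hpert]
    exact add_smulRight_comp_shermanMorrison hR1 hden_ne
  · rw [hpert]
    exact shermanMorrison_comp_add_smulRight hR2 hden_ne
  · rw [shermanMorrison_apply, innerSL_apply_apply, innerSL_apply_apply, hden,
      inner_apply_eq_inner_of_comp_eq_one hR1 (hadj ▸ hS1) ω₁ f, map_smul]
    match_scalars
    · rfl
    · rw [mul_inv]
      field_simp

/-- Krein-type resolvent formula for the nonsymmetric rank-one perturbation:
if `A - z` is invertible with inverse `R`, `A - z̄` is invertible with inverse `S`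
(automatic since `A` is selfadjoint), and `α⁻¹ + (R ω₂, ω₁) ≠ 0`, then `Ã - z` is
invertible and `(Ã - z)⁻¹ f = R f + b_z (f, n_z̄) m_z` with `m_z = R ω₂`,
`n_z̄ = S ω₁`, `b_z = -(α⁻¹ + (R ω₂, ω₁))⁻¹`. -/
theorem krein_formula_rankOnePert {H : Type*} [NormedAddCommGroup H] [InnerProductSpace ℂ H]
    [CompleteSpace H] (A : H →L[ℂ] H) (hA : IsSelfAdjoint A) (ω₁ ω₂ : H) (α : ℂ) (hα : α ≠ 0)
    (z : ℂ) (R : H →L[ℂ] H)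
    (hR1 : (A - z • 1) ∘L R = 1) (hR2 : R ∘L (A - z • 1) = 1)
    (S : H →L[ℂ] H)
    (hS1 : (A - (starRingEnd ℂ) z • 1) ∘L S = 1) (hS2 : S ∘L (A - (starRingEnd ℂ) z • 1) = 1)
    (hb : α⁻¹ + ⟪ω₁, R ω₂⟫ ≠ 0) :
    ∃ T : H →L[ℂ] H,
      (rankOnePert A α ω₁ ω₂ - z • 1) ∘L T = 1 ∧
      T ∘L (rankOnePert A α ω₁ ω₂ - z • 1) = 1 ∧
      ∀ f : H, T f = R f + (-(α⁻¹ + ⟪ω₁, R ω₂⟫)⁻¹) • ⟪S ω₁, f⟫ • R ω₂ :=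
  krein_formula_rankOnePert_general A hA ω₁ ω₂ α hα z R hR1 hR2 S hS1 hb
end

section
/- Let H be a complex Hilbert space, A and Ã continuous linear operators on H, z ∈ ℂ such that A − z and Ã − z are invertible, and suppose the resolvents are related by (Ã − z)⁻¹ = (A − z)⁻¹ + b_z(·, n)m for some b_z ∈ ℂ and m, n ∈ H. Let λ ∈ ℂ with λ ≠ z be such that A − λ is invertible, and let φ ∈ H, φ ≠ 0, satisfy Ãφ = λφ. Then, setting v := (A − z)(A − λ)⁻¹ m, one has: (i) (λ − z)·b_z·(v, n) = 1, and (ii) φ is a nonzero scalar multiple of v; in particular, for the normalized eigenvector φ = v one has (λ − z)·b_z·(φ, n) = 1. -/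
/-!
Applying `Rt = (Ã - z)⁻¹` to `(Ã - z)φ = (λ - z)φ` and then `A - z` to the result gives
`(A - λ)φ = c (A - z)m` with `c = (λ - z) b (φ, n)`. Since `(A - λ)⁻¹` commutes with `A - z`,
this says `φ = c v`. Hence `c ≠ 0`, and pairing `φ = c v` with `n` turns
`c = (λ - z) b (φ, n)` into `c = c (λ - z) b (v, n)`.
-/

open ContinuousLinearMap

local notation "⟪" x ", " y "⟫" => @inner ℂ _ _ x y

theorem Commute.sub_smul_one_of_mul_eq_one {𝕜 R : Type*} [CommRing 𝕜] [Ring R] [Algebra 𝕜 R]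
    {a l : R} {lam : 𝕜} (h₁ : (a - lam • 1) * l = 1) (h₂ : l * (a - lam • 1) = 1) (μ : 𝕜) :
    Commute (a - μ • 1) l := by
  have hcomm : Commute (a - lam • 1) l := h₁.trans h₂.symm
  have hshift : a - μ • 1 = (a - lam • 1) + (lam - μ) • (1 : R) := by
    rw [sub_smul]; abel
  rw [hshift]
  exact hcomm.add_left ((Commute.one_left l).smul_left _)

section

variable {𝕜 E : Type*} [NormedField 𝕜] [NormedAddCommGroup E] [NormedSpace 𝕜 E]

theorem eigenvector_eq_smul_of_resolvent_eq_add_rankOne {A At R Rt L : E →L[𝕜] E} {z lam b : 𝕜}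
    {m : E} {ℓ : E → 𝕜} (hR : (A - z • 1) ∘L R = 1) (hRt : Rt ∘L (At - z • 1) = 1)
    (hrel : ∀ f, Rt f = R f + b • ℓ f • m)
    (hL₁ : (A - lam • 1) ∘L L = 1) (hL₂ : L ∘L (A - lam • 1) = 1)
    {φ : E} (heig : At φ = lam • φ) :
    φ = ((lam - z) * b * ℓ φ) • (A - z • 1) (L m) := by
  set c := (lam - z) * b * ℓ φ
  have hφ : φ = (lam - z) • (R φ + b • ℓ φ • m) := by
    have hAt : (At - z • 1) φ = (lam - z) • φ := by simp [heig, sub_smul]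
    rw [← hrel, ← map_smul, ← hAt]
    exact congr($hRt φ).symm
  have hAφ : (A - lam • 1) φ = c • (A - z • 1) m := by
    have hAz : (A - z • 1) φ = (lam - z) • φ + c • (A - z • 1) m := by
      conv_lhs => rw [hφ]
      rw [map_smul, map_add, map_smul, map_smul, ← comp_apply, hR, one_apply_eq_self, smul_add,
        smul_smul, smul_smul]
    calc (A - lam • 1) φ = (A - z • 1) φ - (lam - z) • φ := by simp [sub_smul]
      _ = c • (A - z • 1) m := by rw [hAz, add_sub_cancel_left]
  have hLA : L ∘L (A - z • 1) = (A - z • 1) ∘L L :=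
    (Commute.sub_smul_one_of_mul_eq_one hL₁ hL₂ z).symm.eq
  calc φ = L ((A - lam • 1) φ) := congr($hL₂ φ).symm
    _ = c • (A - z • 1) (L m) := by rw [hAφ, map_smul, ← comp_apply, hLA, comp_apply]

end

theorem LinearMap.mul_apply_eq_one_of_eq_smul {𝕜 E : Type*} [CommRing 𝕜] [IsDomain 𝕜]
    [AddCommGroup E] [Module 𝕜 E]
    {ℓ : E →ₗ[𝕜] 𝕜} {k : 𝕜} {φ v : E} (hφ : φ ≠ 0) (h : φ = (k * ℓ φ) • v) :
    k * ℓ v = 1 := by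
  have hℓφ : ℓ φ ≠ 0 := fun h0 => hφ (by rw [h, h0, mul_zero, zero_smul])
  have : ℓ φ * (k * ℓ v) = ℓ φ * 1 := by
    conv_rhs => rw [h, map_smul, smul_eq_mul]
    ring
  exact mul_left_cancel₀ hℓφ this

theorem eigenvalue_relation_general {H : Type*} [NormedAddCommGroup H] [InnerProductSpace ℂ H]
    (A At : H →L[ℂ] H) (z : ℂ)
    (R : H →L[ℂ] H) (hR1 : (A - z • 1) ∘L R = 1)
    (Rt : H →L[ℂ] H) (hRt2 : Rt ∘L (At - z • 1) = 1)
    (b : ℂ) (m n : H) (hrel : ∀ f : H, Rt f = R f + b • ⟪n, f⟫ • m)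
    (lam : ℂ)
    (L : H →L[ℂ] H) (hL1 : (A - lam • 1) ∘L L = 1) (hL2 : L ∘L (A - lam • 1) = 1)
    (φ : H) (hφ : φ ≠ 0) (heig : At φ = lam • φ) :
    (lam - z) * b * ⟪n, (A - z • 1) (L m)⟫ = 1 ∧
      ∃ c : ℂ, c ≠ 0 ∧ φ = c • (A - z • 1) (L m) := by
  have hφv := eigenvector_eq_smul_of_resolvent_eq_add_rankOne hR1 hRt2 hrel hL1 hL2 heig
  refine ⟨LinearMap.mul_apply_eq_one_of_eq_smul (ℓ := innerₛₗ ℂ n) hφ hφv, _, ?_, hφv⟩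
  rintro h0
  exact hφ (by rw [hφv, h0, zero_smul])

/-- Theorem 2 of the paper (regular-vector analogue): if the resolvents of `A` and `Ã`
are related by `(Ã - z)⁻¹ = (A - z)⁻¹ + b_z(·,n)m` and `Ãφ = λφ` with `φ ≠ 0`,
`λ ≠ z`, `λ ∉ σ(A)`, then with `v = (A - z)(A - λ)⁻¹ m` one has
`(λ - z) b_z (v, n) = 1` and `φ` is a nonzero multiple of `v`. -/
theorem eigenvalue_relation {H : Type*} [NormedAddCommGroup H] [InnerProductSpace ℂ H]
    [CompleteSpace H] (A At : H →L[ℂ] H) (z : ℂ)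
    (R : H →L[ℂ] H) (hR1 : (A - z • 1) ∘L R = 1) (hR2 : R ∘L (A - z • 1) = 1)
    (Rt : H →L[ℂ] H) (hRt1 : (At - z • 1) ∘L Rt = 1) (hRt2 : Rt ∘L (At - z • 1) = 1)
    (b : ℂ) (m n : H) (hrel : ∀ f : H, Rt f = R f + b • ⟪n, f⟫ • m)
    (lam : ℂ) (hlz : lam ≠ z)
    (L : H →L[ℂ] H) (hL1 : (A - lam • 1) ∘L L = 1) (hL2 : L ∘L (A - lam • 1) = 1)
    (φ : H) (hφ : φ ≠ 0) (heig : At φ = lam • φ) :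
    (lam - z) * b * ⟪n, (A - z • 1) (L m)⟫ = 1 ∧
      ∃ c : ℂ, c ≠ 0 ∧ φ = c • (A - z • 1) (L m) :=
  eigenvalue_relation_general A At z R hR1 Rt hRt2 b m n hrel lam L hL1 hL2 φ hφ heig
end

section
/- Let H be a complex Hilbert space, A a continuous linear operator on H, ω₁, ω₂ ∈ H, α ∈ ℂ, and Ã = A + α(·,ω₁)ω₂. Let λ ∈ ℂ be such that A − λ is invertible, and suppose φ ∈ H, φ ≠ 0, satisfies Ãφ = λφ. Then α·((A − λ)⁻¹ω₂, ω₁) = −1, the number (φ, ω₁) is nonzero, and φ = −α(φ,ω₁)·(A − λ)⁻¹ω₂; in particular φ is a nonzero scalar multiple of (A − λ)⁻¹ω₂. -/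
open ContinuousLinearMap

local notation "⟪" x ", " y "⟫" => @inner ℂ _ _ x y

/-! `(A - λ)φ = -α(φ,ω₁) ω₂` forces `φ = -α(φ,ω₁) (A - λ)⁻¹ω₂`; pairing
this with `ω₁` gives `(φ,ω₁) (1 + α((A - λ)⁻¹ω₂, ω₁)) = 0`, and `(φ,ω₁) ≠ 0` because `φ ≠ 0`. -/

namespace Module.Dual

variable {R M : Type*} [CommRing R] [AddCommGroup M] [Module R M] (f : Module.Dual R M)
  {α : R} {x v : M}

theorem apply_ne_zero_of_eq_neg_mul_apply_smul (hx : x ≠ 0) (h : x = (-(α * f x)) • v) :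
    f x ≠ 0 := by
  intro hfx
  rw [hfx, mul_zero, neg_zero, zero_smul] at h
  exact hx h

theorem mul_apply_eq_neg_one_of_eq_neg_mul_apply_smul [IsDomain R] (hx : x ≠ 0)
    (h : x = (-(α * f x)) • v) : α * f v = -1 := by
  have hfx : f x = -(α * f x) * f v := by
    conv_lhs => rw [h]
    rw [map_smul, smul_eq_mul]
  have hprod : f x * (1 + α * f v) = 0 := by linear_combination hfx
  have hfx_ne := f.apply_ne_zero_of_eq_neg_mul_apply_smul hx h
  linear_combination (mul_eq_zero.mp hprod).resolve_left hfx_ne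

end Module.Dual

section RankOnePert

variable {H : Type*} [NormedAddCommGroup H] [InnerProductSpace ℂ H]
  (A : H →L[ℂ] H) (α : ℂ) (ω₁ ω₂ : H)

theorem rankOnePert_apply (x : H) :
    rankOnePert A α ω₁ ω₂ x = A x + (α * ⟪ω₁, x⟫) • ω₂ := by
  simp [rankOnePert, smul_smul]

theorem sub_smul_one_apply_eq_of_rankOnePert_apply_eq {lam : ℂ} {φ : H}
    (heig : rankOnePert A α ω₁ ω₂ φ = lam • φ) :
    (A - lam • 1) φ = (-(α * ⟪ω₁, φ⟫)) • ω₂ := by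
  rw [rankOnePert_apply] at heig
  rw [sub_apply, smul_apply, one_apply_eq_self, ← heig, neg_smul]
  abel

end RankOnePert

theorem eigenvector_formula_general {H : Type*} [NormedAddCommGroup H] [InnerProductSpace ℂ H]
    (A : H →L[ℂ] H) (ω₁ ω₂ : H) (α : ℂ) (lam : ℂ)
    (L : H →L[ℂ] H) (hL2 : L ∘L (A - lam • 1) = 1)
    (φ : H) (hφ : φ ≠ 0) (heig : rankOnePert A α ω₁ ω₂ φ = lam • φ) :
    α * ⟪ω₁, L ω₂⟫ = -1 ∧ ⟪ω₁, φ⟫ ≠ 0 ∧ φ = (-(α * ⟪ω₁, φ⟫)) • L ω₂ := by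
  have hφ_eq : φ = (-(α * ⟪ω₁, φ⟫)) • L ω₂ := by
    rw [← map_smul, ← sub_smul_one_apply_eq_of_rankOnePert_apply_eq A α ω₁ ω₂ heig,
      ← comp_apply, hL2, one_apply_eq_self]
  let f : Module.Dual ℂ H := innerₛₗ ℂ ω₁
  exact ⟨f.mul_apply_eq_neg_one_of_eq_neg_mul_apply_smul hφ hφ_eq,
    f.apply_ne_zero_of_eq_neg_mul_apply_smul hφ hφ_eq, hφ_eq⟩

/-- Eigenvalue relation (fnd) of Proposition 2: if `Ãφ = λφ`, `φ ≠ 0`, and `A - λ` is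
invertible with inverse `L`, then `α((A - λ)⁻¹ω₂, ω₁) = -1`, `(φ, ω₁) ≠ 0`, and
`φ = -α(φ, ω₁)(A - λ)⁻¹ω₂`. -/
theorem eigenvector_formula {H : Type*} [NormedAddCommGroup H] [InnerProductSpace ℂ H]
    [CompleteSpace H] (A : H →L[ℂ] H) (ω₁ ω₂ : H) (α : ℂ) (lam : ℂ)
    (L : H →L[ℂ] H) (hL1 : (A - lam • 1) ∘L L = 1) (hL2 : L ∘L (A - lam • 1) = 1)
    (φ : H) (hφ : φ ≠ 0) (heig : rankOnePert A α ω₁ ω₂ φ = lam • φ) :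
    α * ⟪ω₁, L ω₂⟫ = -1 ∧ ⟪ω₁, φ⟫ ≠ 0 ∧ φ = (-(α * ⟪ω₁, φ⟫)) • L ω₂ :=
  eigenvector_formula_general A ω₁ ω₂ α lam L hL2 φ hφ heig
end

section
/- Let H be a complex Hilbert space, A a continuous linear selfadjoint operator on H, ω₁, ω₂ ∈ H, α ∈ ℂ, and Ã = A + α(·,ω₁)ω₂. Let λ ∈ ℂ be such that A − \bar λ is invertible, and suppose ψ ∈ H, ψ ≠ 0, satisfies Ã*ψ = \bar λ ψ. Then \bar α·((A − \bar λ)⁻¹ω₁, ω₂) = −1, and ψ is a nonzero scalar multiple of (A − \bar λ)⁻¹ω₁. -/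
open ContinuousLinearMap

local notation "⟪" x ", " y "⟫" => @inner ℂ _ _ x y

/-- Adjoint eigenvalue relation (fnd+) of Proposition 2: if `A` is selfadjoint,
`Ã*ψ = λ̄ψ` with `ψ ≠ 0`, and `A - λ̄` is invertible with inverse `L`, then
`ᾱ((A - λ̄)⁻¹ω₁, ω₂) = -1` and `ψ` is a nonzero multiple of `(A - λ̄)⁻¹ω₁`. -/
theorem adjoint_eigenvector_formula {H : Type*} [NormedAddCommGroup H] [InnerProductSpace ℂ H]
    [CompleteSpace H] (A : H →L[ℂ] H) (hA : IsSelfAdjoint A) (ω₁ ω₂ : H) (α : ℂ) (lam : ℂ)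
    (L : H →L[ℂ] H)
    (hL1 : (A - (starRingEnd ℂ) lam • 1) ∘L L = 1)
    (hL2 : L ∘L (A - (starRingEnd ℂ) lam • 1) = 1)
    (ψ : H) (hψ : ψ ≠ 0)
    (heig : (ContinuousLinearMap.adjoint (rankOnePert A α ω₁ ω₂)) ψ = (starRingEnd ℂ) lam • ψ) :
    (starRingEnd ℂ) α * ⟪ω₂, L ω₁⟫ = -1 ∧ ∃ c : ℂ, c ≠ 0 ∧ ψ = c • L ω₁ := by
  set c : ℂ := (starRingEnd ℂ) α * ⟪ω₂, ψ⟫ with hc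
  have key : ∀ x : H, ⟪A ψ + c • ω₁, x⟫ = ⟪(starRingEnd ℂ) lam • ψ, x⟫ := by
    intro x
    rw [← heig, ContinuousLinearMap.adjoint_inner_left]
    have hsym : ⟪A ψ, x⟫ = ⟪ψ, A x⟫ := hA.isSymmetric ψ x
    simp only [rankOnePert, ContinuousLinearMap.add_apply, ContinuousLinearMap.smul_apply,
      ContinuousLinearMap.smulRight_apply, innerSL_apply_apply, inner_add_left, inner_add_right,
      inner_smul_left, inner_smul_right, hsym, hc, map_mul, starRingEnd_self_apply,
      inner_conj_symm]
    ring
  have h : A ψ + c • ω₁ = (starRingEnd ℂ) lam • ψ := ext_inner_right ℂ key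
  have h2 : (A - (starRingEnd ℂ) lam • 1) ψ = (-c) • ω₁ := by
    simp only [ContinuousLinearMap.sub_apply, ContinuousLinearMap.smul_apply,
      ContinuousLinearMap.one_apply]
    rw [eq_sub_of_add_eq h]
    module
  have hLψ : ψ = (-c) • L ω₁ := by
    have := congrFun (congrArg DFunLike.coe hL2) ψ
    simp only [ContinuousLinearMap.comp_apply, ContinuousLinearMap.one_apply] at this
    rw [← this, h2, map_smul]
  have hcne : c ≠ 0 := by
    intro h0
    apply hψ
    rw [hLψ, h0, neg_zero, zero_smul]
  have hinner : ⟪ω₂, ψ⟫ = (-c) * ⟪ω₂, L ω₁⟫ := by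
    rw [hLψ, inner_smul_right]
  have h3 := hc
  rw [hinner] at h3
  refine ⟨?_, -c, neg_ne_zero.mpr hcne, hLψ⟩
  exact mul_left_cancel₀ hcne (show c * ((starRingEnd ℂ) α * ⟪ω₂, L ω₁⟫) = c * (-1) by
    linear_combination h3)
end

section
/- Let H be a complex Hilbert space, A a continuous linear operator on H, ω₁, ω₂ ∈ H with ω₂ ≠ 0, α ∈ ℂ, and Ã = A + α(·,ω₁)ω₂. Let λ ∈ ℂ be such that A − λ is invertible. Then λ is an eigenvalue of Ã (i.e. there exists φ ≠ 0 with Ãφ = λφ) if and only if α·((A − λ)⁻¹ω₂, ω₁) = −1; moreover, when this holds, φ := (A − λ)⁻¹ω₂ is a corresponding eigenvector. -/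
open ContinuousLinearMap

local notation "⟪" x ", " y "⟫" => @inner ℂ _ _ x y

/-- Eigenvalue criterion: for `λ ∉ σ(A)` with `(A - λ)⁻¹ = L` and `ω₂ ≠ 0`, `λ` is an
eigenvalue of `Ã = A + α(·,ω₁)ω₂` iff `α((A - λ)⁻¹ω₂, ω₁) = -1`, in which case
`(A - λ)⁻¹ω₂` is a corresponding eigenvector. -/
theorem eigenvalue_criterion {H : Type*} [NormedAddCommGroup H] [InnerProductSpace ℂ H]
    [CompleteSpace H] (A : H →L[ℂ] H) (ω₁ ω₂ : H) (hω₂ : ω₂ ≠ 0) (α : ℂ) (lam : ℂ)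
    (L : H →L[ℂ] H) (hL1 : (A - lam • 1) ∘L L = 1) (hL2 : L ∘L (A - lam • 1) = 1) :
    ((∃ φ : H, φ ≠ 0 ∧ rankOnePert A α ω₁ ω₂ φ = lam • φ) ↔ α * ⟪ω₁, L ω₂⟫ = -1) ∧
      (α * ⟪ω₁, L ω₂⟫ = -1 →
        L ω₂ ≠ 0 ∧ rankOnePert A α ω₁ ω₂ (L ω₂) = lam • L ω₂) := by
  have hAL : ∀ x : H, (A - lam • 1) (L x) = x := fun x => by
    have := DFunLike.congr_fun hL1 x
    simpa using this
  have hLA : ∀ x : H, L ((A - lam • 1) x) = x := fun x => by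
    have := DFunLike.congr_fun hL2 x
    simpa using this
  -- key reformulation of the eigenvalue equation
  have key : ∀ φ : H, rankOnePert A α ω₁ ω₂ φ = lam • φ ↔
      (A - lam • 1) φ = -((α * ⟪ω₁, φ⟫) • ω₂) := by
    intro φ
    have h1 : rankOnePert A α ω₁ ω₂ φ = A φ + (α * ⟪ω₁, φ⟫) • ω₂ := by
      simp [rankOnePert, smul_smul]
    have h2 : (A - lam • 1) φ = A φ - lam • φ := by simp
    rw [h1, h2]
    constructor
    · intro h
      have : A φ - lam • φ = -((α * ⟪ω₁, φ⟫) • ω₂) := by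
        rw [sub_eq_iff_eq_add]
        rw [← h]
        abel
      exact this
    · intro h
      have := sub_eq_iff_eq_add.mp h
      rw [this]
      abel
  constructor
  · constructor
    · rintro ⟨φ, hφ, hev⟩
      set c : ℂ := ⟪ω₁, φ⟫ with hc
      have heq : (A - lam • 1) φ = -((α * c) • ω₂) := (key φ).mp hev
      have hc0 : c ≠ 0 := by
        intro h0
        apply hφ
        have : (A - lam • 1) φ = 0 := by rw [heq, h0]; simp
        have := hLA φ
        rw [‹(A - lam • 1) φ = 0›] at this
        simpa using this.symm
      have hφL : φ = -((α * c) • L ω₂) := by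
        have := hLA φ
        rw [heq] at this
        simpa using this.symm
      have hcc : c = -(α * c) * ⟪ω₁, L ω₂⟫ := by
        conv_lhs => rw [hc, hφL]
        simp [inner_smul_right]
      have h2 : c * (α * ⟪ω₁, L ω₂⟫ + 1) = 0 := by linear_combination hcc
      rcases mul_eq_zero.mp h2 with h3 | h3
      · exact absurd h3 hc0
      · linear_combination h3
    · intro h
      refine ⟨L ω₂, ?_, ?_⟩
      · intro h0
        rw [h0] at h
        simp at h
      · rw [key]
        rw [h]
        simp [hAL]
  · intro h
    refine ⟨?_, ?_⟩
    · intro h0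
      rw [h0] at h
      simp at h
    · rw [key, h]
      simp [hAL]
end

section
/- Let H be a complex Hilbert space and A a continuous linear selfadjoint operator on H. Let D ⊆ ℂ be a set closed under complex conjugation such that A − z is invertible for every z ∈ D, and write R_z = (A − z)⁻¹. Suppose given families of vectors m_z, n_z ∈ H and nonzero scalars b_z ∈ ℂ, indexed by z ∈ D, satisfying for all z, ξ ∈ D: (i) m_z = m_ξ + (z − ξ)·R_z m_ξ, (ii) n_z = n_ξ + (z − ξ)·R_z n_ξ, and (iii) b_z⁻¹ − b_ξ⁻¹ = (ξ − z)·(m_ξ, n_{\bar z}). Define \tilde R_z := R_z + b_z(·, n_{\bar z})m_z, i.e. \tilde R_z f = R_z f + b_z (f, n_{\bar z}) m_z. Then the family \tilde R_z satisfies the Hilbert (first resolvent) identity: for all z, ξ ∈ D, \tilde R_z − \tilde R_ξ = (z − ξ)·\tilde R_z \tilde R_ξ. -/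
/-!
Write `R̃_z = R_z + b_z P_z` with `P_z f = (f, n_z̄) m_z` and expand `(z - ξ) R̃_z R̃_ξ` into
four terms. The resolvent identity handles `(z - ξ) R_z R_ξ`; relation (i) turns
`(z - ξ) R_z m_ξ` into `m_z - m_ξ`; relation (ii) at `z̄, ξ̄`, together with `R_ξ* = R_ξ̄`, turns
`(z - ξ) (R_ξ f, n_z̄)` into `(f, n_z̄ - n_ξ̄)`; and (iii) turns `(z - ξ) b_z b_ξ (m_ξ, n_z̄)` into
`b_z - b_ξ`. The four terms then telescope to `R̃_z - R̃_ξ`.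
-/

open ContinuousLinearMap

local notation "⟪" x ", " y "⟫" => @inner ℂ _ _ x y

theorem sub_eq_smul_mul_of_mul_sub_smul_one {𝕜 A : Type*} [CommRing 𝕜] [Ring A] [Algebra 𝕜 A]
    {a r₁ r₂ : A} {z ξ : 𝕜} (h₁ : r₁ * (a - z • 1) = 1) (h₂ : (a - ξ • 1) * r₂ = 1) :
    r₁ - r₂ = (z - ξ) • (r₁ * r₂) := by
  calc r₁ - r₂ = r₁ * ((a - ξ • 1) - (a - z • 1)) * r₂ := by
        rw [mul_sub, sub_mul, mul_assoc, h₂, h₁, mul_one, one_mul]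
    _ = (z - ξ) • (r₁ * r₂) := by
        rw [sub_sub_sub_cancel_left, ← sub_smul, mul_smul_one, smul_mul_assoc]

theorem star_eq_of_mul_sub_smul_one {𝕜 A : Type*} [CommRing 𝕜] [StarRing 𝕜] [Ring A]
    [StarRing A] [Algebra 𝕜 A] [StarModule 𝕜 A] {a r s : A} (ha : IsSelfAdjoint a) {z : 𝕜}
    (hr : (a - z • 1) * r = 1) (hs : (a - star z • 1) * s = 1) : star r = s := by
  refine left_inv_eq_right_inv ?_ hs
  simpa [star_sub, ha.star_eq, star_smul] using congrArg star hr

theorem add_smul_smulRight_sub_eq_smul_comp {𝕜 E : Type*} [CommRing 𝕜] [TopologicalSpace 𝕜]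
    [IsTopologicalRing 𝕜] [AddCommGroup E] [Module 𝕜 E] [TopologicalSpace E]
    [IsTopologicalAddGroup E] [ContinuousSMul 𝕜 E] {R₁ R₂ : E →L[𝕜] E} {φ₁ φ₂ : E →L[𝕜] 𝕜} {m₁ m₂ : E} {b₁ b₂ c : 𝕜}
    (hR : R₁ - R₂ = c • (R₁ ∘L R₂)) (hm : c • R₁ m₂ = m₁ - m₂)
    (hφ : c • (φ₁ ∘L R₂) = φ₁ - φ₂) (hb : b₁ - b₂ = c * φ₁ m₂ * b₁ * b₂) :
    (R₁ + b₁ • φ₁.smulRight m₁) - (R₂ + b₂ • φ₂.smulRight m₂)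
      = c • ((R₁ + b₁ • φ₁.smulRight m₁) ∘L (R₂ + b₂ • φ₂.smulRight m₂)) := by
  ext f
  have hRf : R₁ f - R₂ f = c • R₁ (R₂ f) := by simpa using congr($hR f)
  have hφf : c * φ₁ (R₂ f) = φ₁ f - φ₂ f := by simpa using congr($hφ f)
  simp only [sub_apply, add_apply, smul_apply, comp_apply, smulRight_apply, map_add, map_smul]
  linear_combination (norm := module) hRf - (b₂ * φ₂ f) • hm - (b₁ • hφf) • m₁
    + (φ₂ f • hb) • m₁

theorem smul_innerSL_comp_eq_sub {𝕜 E : Type*} [RCLike 𝕜] [NormedAddCommGroup E]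
    [InnerProductSpace 𝕜 E] [CompleteSpace E] {T S : E →L[𝕜] E} (hT : adjoint T = S)
    {n₁ n₂ : E} {c : 𝕜} (h : starRingEnd 𝕜 c • S n₁ = n₁ - n₂) :
    c • (innerSL 𝕜 n₁ ∘L T) = innerSL 𝕜 n₁ - innerSL 𝕜 n₂ := by
  rw [innerSL_apply_comp, hT, ← map_sub, ← h, map_smulₛₗ, RCLike.conj_conj]

theorem sub_eq_mul_mul_of_inv_sub_inv {K : Type*} [Field K] {b₁ b₂ z ξ p : K} (h₁ : b₁ ≠ 0)
    (h₂ : b₂ ≠ 0) (h : b₁⁻¹ - b₂⁻¹ = (ξ - z) * p) : b₁ - b₂ = (z - ξ) * p * b₁ * b₂ := by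
  field_simp at h
  linear_combination -h

/-- Part a) of Proposition 4 of the paper: under the compatibility relations (11) and
(12) on the families `m_z`, `n_z`, `b_z`, the perturbed family
`R̃_z = R_z + b_z(·, n_z̄)m_z` satisfies the Hilbert (first resolvent) identity
`R̃_z - R̃_ξ = (z - ξ) R̃_z R̃_ξ`. -/
theorem perturbed_pseudoresolvent {H : Type*} [NormedAddCommGroup H] [InnerProductSpace ℂ H]
    [CompleteSpace H] (A : H →L[ℂ] H) (hA : IsSelfAdjoint A)
    (D : Set ℂ) (hD : ∀ z ∈ D, (starRingEnd ℂ) z ∈ D)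
    (R : ℂ → H →L[ℂ] H)
    (hR1 : ∀ z ∈ D, (A - z • 1) ∘L R z = 1) (hR2 : ∀ z ∈ D, R z ∘L (A - z • 1) = 1)
    (m n : ℂ → H) (b : ℂ → ℂ) (hb : ∀ z ∈ D, b z ≠ 0)
    (hm : ∀ z ∈ D, ∀ ξ ∈ D, m z = m ξ + (z - ξ) • R z (m ξ))
    (hn : ∀ z ∈ D, ∀ ξ ∈ D, n z = n ξ + (z - ξ) • R z (n ξ))
    (hbrel : ∀ z ∈ D, ∀ ξ ∈ D,
      (b z)⁻¹ - (b ξ)⁻¹ = (ξ - z) * ⟪n ((starRingEnd ℂ) z), m ξ⟫) :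
    ∀ z ∈ D, ∀ ξ ∈ D,
      (R z + b z • (innerSL ℂ (n ((starRingEnd ℂ) z))).smulRight (m z))
        - (R ξ + b ξ • (innerSL ℂ (n ((starRingEnd ℂ) ξ))).smulRight (m ξ))
      = (z - ξ) •
        ((R z + b z • (innerSL ℂ (n ((starRingEnd ℂ) z))).smulRight (m z)) ∘L
         (R ξ + b ξ • (innerSL ℂ (n ((starRingEnd ℂ) ξ))).smulRight (m ξ))) := by
  intro z hz ξ hξ
  have hadj : adjoint (R ξ) = R (starRingEnd ℂ ξ) := by
    rw [← star_eq_adjoint]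
    exact star_eq_of_mul_sub_smul_one hA (hR1 ξ hξ) (hR1 _ (hD ξ hξ))
  refine add_smul_smulRight_sub_eq_smul_comp ?_ ?_ ?_ ?_
  · exact sub_eq_smul_mul_of_mul_sub_smul_one (hR2 z hz) (hR1 ξ hξ)
  · rw [hm z hz ξ hξ, add_sub_cancel_left]
  · refine smul_innerSL_comp_eq_sub hadj ?_
    rw [hn _ (hD ξ hξ) _ (hD z hz), map_sub]
    module
  · exact sub_eq_mul_mul_of_inv_sub_inv (hb z hz) (hb ξ hξ) (hbrel z hz ξ hξ)
end

section
/- Let H be a complex Hilbert space, A a continuous linear operator on H, and z ∈ ℂ such that A − z is invertible with inverse R_z. Let m, n ∈ H and b ∈ ℂ, and define \tilde R := R_z + b(·, n)m, i.e. \tilde R f = R_z f + b (f, n) m. If 1 + b·((A − z)m, n) ≠ 0, then \tilde R has trivial kernel: \tilde R f = 0 implies f = 0. -/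
open ContinuousLinearMap

local notation "⟪" x ", " y "⟫" => @inner ℂ _ _ x y

/-- Part b) of Proposition 4 of the paper: if `1 + b((A - z)m, n) ≠ 0` then the
perturbed operator `R̃ = R_z + b(·,n)m` has trivial kernel. -/
theorem perturbed_resolvent_injective {H : Type*} [NormedAddCommGroup H]
    [InnerProductSpace ℂ H] [CompleteSpace H] (A : H →L[ℂ] H) (z : ℂ)
    (R : H →L[ℂ] H) (hR1 : (A - z • 1) ∘L R = 1) (hR2 : R ∘L (A - z • 1) = 1)
    (m n : H) (b : ℂ)
    (h : 1 + b * ⟪n, (A - z • 1) m⟫ ≠ 0)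
    (f : H) (hf : R f + b • ⟪n, f⟫ • m = 0) : f = 0 := by
  set T := A - z • (1 : H →L[ℂ] H) with hT
  have hRf : R f = -(b • ⟪n, f⟫ • m) := by linear_combination (norm := module) hf
  have hfT : f = -(b • ⟪n, f⟫ • T m) := by
    have := congrArg (fun x => T x) hRf
    simpa [← ContinuousLinearMap.comp_apply, hR1] using this
  have hc : ⟪n, f⟫ * (1 + b * ⟪n, T m⟫) = 0 := by
    have := congrArg (fun x => ⟪n, x⟫) hfT
    simp only [inner_neg_right, inner_smul_right] at this
    ring_nf
    ring_nf at this
    linear_combination this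
  have hc0 : ⟪n, f⟫ = 0 := by
    rcases mul_eq_zero.1 hc with h0 | h0
    · exact h0
    · exact absurd h0 h
  rw [hfT, hc0]
  simp
end
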